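/- arXiv:1310.8245 — 3 statements merged into one kernel-verified Lean document; each statement's English description precedes it below -/
import Mathlib

section
/- Let s be a Nash equilibrium of the network creation game with n players and edge price α > 0 whose graph G_s contains a cycle, and let c be the length of a shortest cycle of G_s. Then α ≤ (c−2)(n−1). -/
open SimpleGraph ENNReal

/-- The undirected graph built by a strategy profile: `i` and `j` are adjacent
iff one of them bought an edge to the other. -/
def stratGraph {n : ℕ} (s : Fin n → Finset (Fin n)) : SimpleGraph (Fin n) where
  Adj i j := i ≠ j ∧ (j ∈ s i ∨ i ∈ s j)
  symm := ⟨fun i j h => ⟨h.1.symm, h.2.symm⟩⟩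
  loopless := ⟨fun i h => h.1 rfl⟩

/-- The cost of player `i`: `α` per bought edge plus the sum of (extended)
distances to all players (`⊤` encodes disconnection). -/
noncomputable def playerCost {n : ℕ} (α : ℝ) (s : Fin n → Finset (Fin n)) (i : Fin n) : ℝ≥0∞ :=
  ENNReal.ofReal α * (s i).card + ∑ j, (stratGraph s).edist i j

/-- A strategy profile (where no player buys an edge to itself) is a Nash
equilibrium if no player can strictly decrease its cost by changing its own
strategy. -/
def IsNashEq {n : ℕ} (α : ℝ) (s : Fin n → Finset (Fin n)) : Prop :=
  (∀ i, i ∉ s i) ∧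
  ∀ (i : Fin n) (t : Finset (Fin n)), i ∉ t →
    playerCost α s i ≤ playerCost α (Function.update s i t) i

/-!
Let `{i, j}` be an edge of a shortest cycle, of length `c`, bought by `i`. The rest of the cycle
is an `i`–`j` walk of length `c - 1` avoiding `{i, j}`, and a shortest path uses that edge at
most once; so after deleting the edge every distance grows by at most `c - 2`. Dropping the edge
thus saves `i` the price `α` and costs it at most `(c - 2)(n - 1)` in distances, and stability
forces `α ≤ (c - 2)(n - 1)`.
-/

namespace SimpleGraph

variable {V : Type*} {G : SimpleGraph V} {x y : V}

lemma Walk.exists_length_add_count_le [DecidableEq V] (q : (G.deleteEdges {s(x, y)}).Walk x y)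
    {u v : V} (p : G.Walk u v) :
    ∃ r : (G.deleteEdges {s(x, y)}).Walk u v,
      r.length + p.edges.count s(x, y) ≤ p.length + q.length * p.edges.count s(x, y) := by
  induction p with
  | nil => exact ⟨.nil, by simp⟩
  | @cons u w v huw p ih =>
    obtain ⟨r, hr⟩ := ih
    by_cases he : s(u, w) = s(x, y)
    · have hcount : (Walk.cons huw p).edges.count s(x, y) = p.edges.count s(x, y) + 1 := by
        simp [he]
      rw [hcount]
      rcases Sym2.eq_iff.mp he with ⟨rfl, rfl⟩ | ⟨rfl, rfl⟩
      · exact ⟨q.append r, by simp only [Walk.length_append, Walk.length_cons]; nlinarith⟩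
      · exact ⟨q.reverse.append r, by
          simp only [Walk.length_append, Walk.length_reverse, Walk.length_cons]; nlinarith⟩
    · have hadj : (G.deleteEdges {s(x, y)}).Adj u w := by simpa [he] using huw
      exact ⟨.cons hadj r, by simp [he]; omega⟩

lemma edist_deleteEdges_le_edist_add {k : ℕ}
    (hxy : (G.deleteEdges {s(x, y)}).edist x y ≤ k + 1) (u v : V) :
    (G.deleteEdges {s(x, y)}).edist u v ≤ G.edist u v + k := by
  classical
  obtain ⟨q, hq⟩ := exists_walk_of_edist_ne_top (ne_top_of_le_ne_top (by simp) hxy)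
  have hqk : q.length ≤ k + 1 := by exact_mod_cast hq ▸ hxy
  rcases eq_or_ne (G.edist u v) ⊤ with huv | huv
  · simp [huv]
  obtain ⟨p, hp⟩ := exists_walk_of_edist_ne_top huv
  obtain ⟨r, hr⟩ := q.exists_length_add_count_le p.bypass
  have hcount : p.bypass.edges.count s(x, y) ≤ 1 :=
    List.nodup_iff_count_le_one.mp p.bypass_isPath.isTrail.edges_nodup _
  have hrp : r.length ≤ p.length + k := by
    have := p.length_bypass_le_length
    interval_cases p.bypass.edges.count s(x, y) <;> nlinarith
  calc (G.deleteEdges {s(x, y)}).edist u v ≤ r.length := edist_le r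
    _ ≤ G.edist u v + k := by rw [← hp]; exact_mod_cast hrp

lemma sum_edist_deleteEdges_le [Fintype V] {k : ℕ}
    (hxy : (G.deleteEdges {s(x, y)}).edist x y ≤ k + 1) (u : V) :
    ∑ v, (G.deleteEdges {s(x, y)}).edist u v
      ≤ ∑ v, G.edist u v + ((Fintype.card V - 1) * k : ℕ) := by
  classical
  rw [← Finset.add_sum_erase _ _ (Finset.mem_univ u),
    ← Finset.add_sum_erase _ _ (Finset.mem_univ u)]
  simp only [edist_self, zero_add]
  calc ∑ v ∈ Finset.univ.erase u, (G.deleteEdges {s(x, y)}).edist u v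
      ≤ ∑ v ∈ Finset.univ.erase u, (G.edist u v + k) :=
        Finset.sum_le_sum fun v _ => edist_deleteEdges_le_edist_add hxy u v
    _ = _ := by simp [Finset.sum_add_distrib, Finset.card_erase_of_mem]

end SimpleGraph

section NetworkCreation

variable {n : ℕ} {α : ℝ} {s : Fin n → Finset (Fin n)}

lemma deleteEdges_stratGraph_le_update_erase (i j : Fin n) :
    (stratGraph s).deleteEdges {s(i, j)} ≤ stratGraph (Function.update s i ((s i).erase j)) := by
  rintro u v ⟨⟨hne, huv⟩, hnot⟩
  refine ⟨hne, ?_⟩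
  simp only [Function.update_apply]
  split_ifs <;> aesop

lemma playerCost_ne_top_of_reachable (i : Fin n) (h : ∀ j, (stratGraph s).Reachable i j) :
    playerCost α s i ≠ ⊤ := by
  have : ∑ j, (stratGraph s).edist i j ≠ ⊤ := by
    simpa [ENat.sum_ne_top] using fun j => edist_ne_top_iff_reachable.mpr (h j)
  simpa [playerCost, ENNReal.mul_eq_top]

lemma IsNashEq.playerCost_ne_top (hs : IsNashEq α s) (i : Fin n) : playerCost α s i ≠ ⊤ := by
  refine ne_top_of_le_ne_top ?_ (hs.2 i (Finset.univ.erase i) (Finset.notMem_erase i _))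
  refine playerCost_ne_top_of_reachable i fun j => ?_
  rcases eq_or_ne i j with rfl | hij
  · rfl
  · exact Adj.reachable ⟨hij, Or.inl (by simpa using hij.symm)⟩

lemma IsNashEq.le_mul_of_mem_of_edist_le {i j : Fin n} {k : ℕ} (hs : IsNashEq α s)
    (hj : j ∈ s i) (hij : ((stratGraph s).deleteEdges {s(i, j)}).edist i j ≤ k + 1) :
    α ≤ k * ((n : ℝ) - 1) := by
  set t := (s i).erase j
  set X := ENNReal.ofReal α * t.card + ((∑ v, (stratGraph s).edist i v : ℕ∞) : ℝ≥0∞)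
  have hcost : playerCost α s i = ENNReal.ofReal α + X := by
    simp only [playerCost, X, ← Finset.card_erase_add_one hj]; push_cast; ring
  have hdist : ∑ v, (stratGraph (Function.update s i t)).edist i v
      ≤ ∑ v, (stratGraph s).edist i v + ((n - 1) * k : ℕ) := by
    simpa using (Finset.sum_le_sum fun v _ =>
      edist_anti (deleteEdges_stratGraph_le_update_erase i j) (u := i) (v := v)).trans
      (sum_edist_deleteEdges_le hij i)
  have hdev : playerCost α (Function.update s i t) i ≤ ((n - 1) * k : ℕ) + X := by
    calc playerCost α (Function.update s i t) i
        ≤ ENNReal.ofReal α * t.card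
          + ((∑ v, (stratGraph s).edist i v + ((n - 1) * k : ℕ) : ℕ∞) : ℝ≥0∞) := by
          simp only [playerCost, Function.update_self]
          exact add_le_add le_rfl (ENat.toENNReal_mono hdist)
      _ = ((n - 1) * k : ℕ) + X := by
          simp only [X, ENat.toENNReal_add, ENat.toENNReal_coe]; ring
  have hX : X ≠ ⊤ := (ENNReal.add_ne_top.mp (hcost ▸ hs.playerCost_ne_top i)).2
  have hstable : ENNReal.ofReal α + X ≤ ((n - 1) * k : ℕ) + X :=
    hcost ▸ (hs.2 i t (by simp [t, hs.1 i])).trans hdev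
  have hα := (ENNReal.ofReal_le_iff_le_toReal (ENNReal.natCast_ne_top _)).mp
    ((ENNReal.add_le_add_iff_right hX).mp hstable)
  rw [ENNReal.toReal_natCast, Nat.cast_mul, Nat.cast_pred i.pos] at hα
  linarith

lemma IsNashEq.le_mul_of_adj_of_edist_le {i j : Fin n} {k : ℕ} (hs : IsNashEq α s)
    (hadj : (stratGraph s).Adj i j)
    (hij : ((stratGraph s).deleteEdges {s(i, j)}).edist i j ≤ k + 1) :
    α ≤ k * ((n : ℝ) - 1) := by
  rcases hadj.2 with hj | hi
  · exact hs.le_mul_of_mem_of_edist_le hj hij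
  · exact hs.le_mul_of_mem_of_edist_le hi (by rwa [Sym2.eq_swap, edist_comm])

end NetworkCreation

theorem alpha_le_girth_sub_two_mul_general {n : ℕ} (α : ℝ)
    (s : Fin n → Finset (Fin n)) (hs : IsNashEq α s)
    (hcyc : ¬ (stratGraph s).IsAcyclic) :
    α ≤ (((stratGraph s).girth : ℝ) - 2) * ((n : ℝ) - 1) := by
  obtain ⟨a, w, hw, hgirth⟩ := exists_girth_eq_length.mpr hcyc
  cases w with
  | nil => exact absurd hw Walk.not_isCycle_nil
  | @cons _ b _ hab p =>
    obtain ⟨-, hedge⟩ := (Walk.cons_isCycle_iff p hab).mp hw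
    obtain ⟨k, hk⟩ : ∃ k, p.length = k + 1 :=
      Nat.exists_eq_add_one_of_ne_zero fun h => hab.ne (Walk.eq_of_length_eq_zero h).symm
    have hdetour : ((stratGraph s).deleteEdges {s(a, b)}).edist a b ≤ k + 1 := by
      rw [edist_comm]
      simpa [hk] using edist_le (p.toDeleteEdge _ hedge)
    have := hs.le_mul_of_adj_of_edist_le hab hdetour
    rw [hgirth, Walk.length_cons, hk]
    push_cast
    linarith

/-- If a Nash equilibrium graph contains a cycle and `c` is the length of a
shortest cycle, then `α ≤ (c − 2)(n − 1)`. -/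
theorem alpha_le_girth_sub_two_mul {n : ℕ} (hn : 2 ≤ n) (α : ℝ) (hα : 0 < α)
    (s : Fin n → Finset (Fin n)) (hs : IsNashEq α s)
    (hcyc : ¬ (stratGraph s).IsAcyclic) :
    α ≤ (((stratGraph s).girth : ℝ) - 2) * ((n : ℝ) - 1) :=
  alpha_le_girth_sub_two_mul_general α s hs hcyc
end

section
/- Let s be a Nash equilibrium of the network creation game with n players and edge price α > 0, let G = G_s, and let H be a non-trivial biconnected component of G. If for some integer t ≥ 1 the t-neighborhood N_t(u) of every vertex u of H contains a vertex of degree at least 3 in H, then the average degree of H is at least 2 + 1/(3t+1). -/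
open SimpleGraph ENNReal

/-- `B` spans a non-trivial biconnected component of `G`: a maximal (vertex) set
of size at least three whose induced subgraph is connected and contains no bridge. -/
def IsNontrivialBicomp {n : ℕ} (G : SimpleGraph (Fin n)) (B : Set (Fin n)) : Prop :=
  3 ≤ B.ncard ∧ (G.induce B).Connected ∧ (∀ e, ¬ (G.induce B).IsBridge e) ∧
  ∀ B' : Set (Fin n), B ⊆ B' →
    (3 ≤ B'.ncard ∧ (G.induce B').Connected ∧ (∀ e, ¬ (G.induce B').IsBridge e)) → B' = B

/-- The degree of `u` inside the subgraph of `G` induced by the vertex set `B`. -/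
noncomputable def degH {n : ℕ} (G : SimpleGraph (Fin n)) (B : Set (Fin n)) (u : Fin n) : ℕ :=
  {w | w ∈ B ∧ G.Adj u w}.ncard
/-- The average degree of the subgraph of `G` induced by `B`
(= `2|E(H)|/|V(H)|`, since the degrees of `H` sum to twice its edge count). -/
noncomputable def avgDegH {n : ℕ} (G : SimpleGraph (Fin n)) (B : Set (Fin n)) : ℝ :=
  (∑ u ∈ B.toFinite.toFinset, (degH G B u : ℝ)) / B.ncard

/-!
In a connected bridgeless graph every degree is at least two, since the edge at a leaf is a bridge.
Charge each vertex `u` of degree two to a nearest vertex `v` of degree at least three, together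
with the first edge and the length `k ≤ t` of a shortest `v`–`u` path. The inner vertices of that
path have degree two, so the path is determined by its first edge and its length, and the charging
is injective. Hence `n₂ ≤ t · S` where `S` is the degree sum over the `n₃` vertices of degree at
least three; with `3 n₃ ≤ S` this gives `(2 + 1/(3t+1)) (n₂ + n₃) ≤ 2 n₂ + S`.
-/

open Finset

theorem two_add_one_div_mul_le {t n₂ n₃ S D : ℝ} (ht : 0 ≤ t) (h₂ : n₂ ≤ t * S)
    (h₃ : 3 * n₃ ≤ S) (hD : 2 * n₂ + S ≤ D) : (2 + 1 / (3 * t + 1)) * (n₂ + n₃) ≤ D := by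
  have hpos : 0 < 3 * t + 1 := by linarith
  have key : n₂ + n₃ ≤ (3 * t + 1) * (S - 2 * n₃) := by
    nlinarith [mul_le_mul_of_nonneg_left h₃ (by linarith : (0 : ℝ) ≤ 2 * t + 1)]
  calc (2 + 1 / (3 * t + 1)) * (n₂ + n₃) = 2 * (n₂ + n₃) + (n₂ + n₃) / (3 * t + 1) := by ring
    _ ≤ 2 * (n₂ + n₃) + (S - 2 * n₃) := by gcongr; rwa [div_le_iff₀' hpos]
    _ ≤ D := by linarith

namespace SimpleGraph

variable {V : Type*} {G : SimpleGraph V}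

theorem Preconnected.two_le_degree_of_forall_not_isBridge [Nontrivial V] (hG : G.Preconnected)
    (hbr : ∀ e, ¬ G.IsBridge e) (v : V) [Fintype (G.neighborSet v)] : 2 ≤ G.degree v := by
  by_contra! hlt
  have hone : G.degree v = 1 := by have := hG.degree_pos_of_nontrivial v; omega
  obtain ⟨w, hvw, huniq⟩ := degree_eq_one_iff_existsUnique_adj.mp hone
  refine hbr s(v, w) (isBridge_iff_forall_walk_mem_edges.mpr fun p => ?_)
  have hnil : ¬ p.Nil := Walk.not_nil_of_ne hvw.ne
  have hedge := p.mk_start_snd_mem_edges hnil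
  rwa [huniq _ (p.adj_snd hnil)] at hedge

theorem eq_of_adj_of_degree_le_two {v x y z : V} [Fintype (G.neighborSet v)]
    (hv : G.degree v ≤ 2) (hx : G.Adj v x) (hy : G.Adj v y) (hz : G.Adj v z)
    (hyx : y ≠ x) (hzx : z ≠ x) : y = z := by
  by_contra hyz
  have : 2 < #(G.neighborFinset v) := two_lt_card.mpr
    ⟨x, by simpa, y, by simpa, z, by simpa, hyx.symm, hzx.symm, hyz⟩
  rw [card_neighborFinset_eq_degree] at this
  omega

theorem Walk.eq_of_isPath_of_degree_le_two [G.LocallyFinite] {u w w' : V} (p : G.Walk u w)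
    (q : G.Walk u w') (hp : p.IsPath) (hq : q.IsPath) (hlen : p.length = q.length)
    (hsnd : p.snd = q.snd) (hdeg : ∀ i, 0 < i → i < p.length → G.degree (p.getVert i) ≤ 2) :
    w = w' := by
  induction p with
  | nil => exact Walk.eq_of_length_eq_zero hlen.symm
  | @cons u a w hua p ih =>
    cases q with
    | nil => simp at hlen
    | @cons _ b _ hub q =>
      obtain rfl : a = b := by simpa [Walk.snd_cons] using hsnd
      rw [Walk.cons_isPath_iff] at hp hq
      replace hlen : p.length = q.length := by simpa using hlen
      rcases Nat.eq_zero_or_pos p.length with hp0 | hp0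
      · exact (Walk.eq_of_length_eq_zero hp0).symm.trans (Walk.eq_of_length_eq_zero (hlen ▸ hp0))
      have hpnil : ¬ p.Nil := Walk.not_nil_iff_lt_length.mpr hp0
      have hqnil : ¬ q.Nil := Walk.not_nil_iff_lt_length.mpr (hlen ▸ hp0)
      have ha : G.degree a ≤ 2 := by
        have h := hdeg 1 one_pos (by simpa using hp0)
        rwa [Walk.getVert_cons_succ, Walk.getVert_zero] at h
      refine ih q hp.1 hq.1 hlen ?_ fun i hi hil => ?_
      · refine eq_of_adj_of_degree_le_two ha hua.symm (p.adj_snd hpnil) (q.adj_snd hqnil) ?_ ?_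
        · exact fun h => hp.2 (h ▸ p.getVert_mem_support 1)
        · exact fun h => hq.2 (h ▸ q.getVert_mem_support 1)
      · have h := hdeg (i + 1) (by omega) (by simpa using hil)
        rwa [Walk.getVert_cons_succ] at h

theorem Connected.card_filter_degree_lt_three_le [Fintype V] [DecidableRel G.Adj]
    (hG : G.Connected) (t : ℕ) (hnb : ∀ u, ∃ v, G.dist u v ≤ t ∧ 3 ≤ G.degree v) :
    #{u | G.degree u < 3} ≤ t * ∑ v with 3 ≤ G.degree v, G.degree v := by
  classical
  set D : Finset V := {v | 3 ≤ G.degree v}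
  have hnear : ∀ u, ∃ v ∈ D, ∃ q : G.Walk v u, q.length = G.dist v u ∧
      ∀ v' ∈ D, G.dist v u ≤ G.dist v' u := by
    intro u
    obtain ⟨v₀, -, h₀⟩ := hnb u
    obtain ⟨v, hv, hmin⟩ := D.exists_min_image (G.dist · u) ⟨v₀, by simpa [D] using h₀⟩
    obtain ⟨q, hq⟩ := hG.exists_walk_length_eq_dist v u
    exact ⟨v, hv, q, hq, hmin⟩
  choose c hcD q hq hmin using hnear
  have hlen_le : ∀ u, (q u).length ≤ t := by
    intro u
    obtain ⟨v, hvt, hv⟩ := hnb u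
    calc (q u).length = G.dist (c u) u := hq u
      _ ≤ G.dist v u := hmin u v (by simpa [D] using hv)
      _ = G.dist u v := dist_comm
      _ ≤ t := hvt
  have hlen_pos : ∀ u, G.degree u < 3 → 0 < (q u).length := by
    intro u hu
    refine Walk.not_nil_iff_lt_length.mp (Walk.not_nil_of_ne fun h => ?_)
    have := hcD u
    simp only [D, mem_filter, mem_univ, true_and, h] at this
    omega
  have hinner : ∀ u i, 0 < i → i < (q u).length → G.degree ((q u).getVert i) ≤ 2 := by
    intro u i hi hil
    by_contra! h
    have hcloser := hmin u _ (by simp only [D, mem_filter, mem_univ, true_and]; exact h)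
    have hdrop := dist_le ((q u).drop i)
    rw [Walk.drop_length] at hdrop
    have := hq u
    omega
  refine (card_le_card_of_injOn (fun u => (⟨c u, (q u).snd, (q u).length⟩ : Σ _ : V, V × ℕ))
    (t := D.sigma fun v => G.neighborFinset v ×ˢ Icc 1 t) ?_ ?_).trans ?_
  · intro u hu
    have hu' : G.degree u < 3 := by simpa using hu
    simp only [coe_sigma, Set.mem_sigma_iff, mem_coe, mem_product, mem_neighborFinset, mem_Icc]
    exact ⟨hcD u, (q u).adj_snd (Walk.not_nil_iff_lt_length.mpr (hlen_pos u hu')),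
      hlen_pos u hu', hlen_le u⟩
  · intro u _ u' _ h
    simp only [Sigma.mk.inj_iff, heq_eq_eq, Prod.mk.injEq] at h
    obtain ⟨hc, hsnd, hlen⟩ := h
    refine (q u).eq_of_isPath_of_degree_le_two ((q u').copy hc.symm rfl)
      ((q u).isPath_of_length_eq_dist (hq u)) ?_ (by simpa using hlen) (by simpa using hsnd)
      (hinner u)
    rw [Walk.isPath_copy]
    exact (q u').isPath_of_length_eq_dist (hq u')
  · simp only [card_sigma, card_product, card_neighborFinset_eq_degree, Nat.card_Icc,
      Nat.add_sub_cancel, mul_sum]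
    exact (sum_congr rfl fun v _ => mul_comm _ _).le

theorem Connected.two_add_one_div_le_sum_degree_div_card [Fintype V] [DecidableRel G.Adj]
    [Nontrivial V] (hG : G.Connected) (hbr : ∀ e, ¬ G.IsBridge e) (t : ℕ)
    (hnb : ∀ u, ∃ v, G.dist u v ≤ t ∧ 3 ≤ G.degree v) :
    2 + 1 / (3 * (t : ℝ) + 1) ≤ (∑ v, (G.degree v : ℝ)) / Fintype.card V := by
  classical
  have hcard : #{v | G.degree v < 3} + #{v | 3 ≤ G.degree v} = Fintype.card V := by
    simpa [add_comm] using card_filter_add_card_filter_not (s := univ) (3 ≤ G.degree ·)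
  have hlow : #{v | G.degree v < 3} • 2 ≤ ∑ v with G.degree v < 3, G.degree v :=
    card_nsmul_le_sum _ _ _ fun v _ =>
      hG.preconnected.two_le_degree_of_forall_not_isBridge hbr v
  have hhigh : #{v | 3 ≤ G.degree v} • 3 ≤ ∑ v with 3 ≤ G.degree v, G.degree v :=
    card_nsmul_le_sum _ _ _ fun v hv => (mem_filter.mp hv).2
  have hsum : 2 * #{v | G.degree v < 3} + ∑ v with 3 ≤ G.degree v, G.degree v ≤
      ∑ v, G.degree v := by
    rw [← sum_filter_add_sum_filter_not univ (3 ≤ G.degree ·) (G.degree ·)]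
    simp only [not_le, smul_eq_mul] at hlow ⊢
    omega
  have hcount := hG.card_filter_degree_lt_three_le t hnb
  rw [le_div_iff₀ (by exact_mod_cast Fintype.card_pos), ← hcard]
  push_cast
  rw [smul_eq_mul, mul_comm] at hhigh
  exact two_add_one_div_mul_le t.cast_nonneg (S := ∑ v with 3 ≤ G.degree v, (G.degree v : ℝ))
    (by exact_mod_cast hcount) (by exact_mod_cast hhigh) (by exact_mod_cast hsum)

end SimpleGraph

theorem degH_eq_degree_induce {n : ℕ} (G : SimpleGraph (Fin n)) (B : Set (Fin n)) (u : B)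
    [Fintype ((G.induce B).neighborSet u)] : degH G B u = (G.induce B).degree u := by
  have himage : {w | w ∈ B ∧ G.Adj u w} = Subtype.val '' (G.induce B).neighborSet u := by
    ext w
    exact ⟨fun ⟨hw, hadj⟩ => ⟨⟨w, hw⟩, hadj, rfl⟩, fun ⟨_, hadj, hw⟩ => hw ▸ ⟨by simp, hadj⟩⟩
  rw [degH, himage, Set.ncard_image_of_injective _ Subtype.val_injective,
    Set.ncard_eq_toFinset_card', ← card_neighborSet_eq_degree, Set.toFinset_card]

theorem avgDegH_eq_sum_degree_induce_div_card {n : ℕ} (G : SimpleGraph (Fin n)) (B : Set (Fin n))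
    [Fintype B] [DecidableRel (G.induce B).Adj] :
    avgDegH G B = (∑ u : B, ((G.induce B).degree u : ℝ)) / Fintype.card B := by
  rw [avgDegH, sum_subtype (F := ‹_›) _ fun _ => B.toFinite.mem_toFinset,
    Set.ncard_eq_toFinset_card', Set.toFinset_card]
  simp only [degH_eq_degree_induce]

theorem avg_degree_ge_general {n : ℕ}
    (s : Fin n → Finset (Fin n))
    (B : Set (Fin n)) (hB : IsNontrivialBicomp (stratGraph s) B)
    (t : ℕ)
    (hnb : ∀ u : Fin n, ∀ hu : u ∈ B, ∃ v : Fin n, ∃ hv : v ∈ B,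
      ((stratGraph s).induce B).dist ⟨u, hu⟩ ⟨v, hv⟩ ≤ t ∧
      3 ≤ degH (stratGraph s) B v) :
    2 + 1 / (3 * (t : ℝ) + 1) ≤ avgDegH (stratGraph s) B := by
  classical
  obtain ⟨hcard, hconn, hbr, -⟩ := hB
  have : Nontrivial B := Set.one_lt_ncard_iff_nontrivial.mp (by omega) |>.coe_sort
  rw [avgDegH_eq_sum_degree_induce_div_card]
  refine hconn.two_add_one_div_le_sum_degree_div_card hbr t fun ⟨u, hu⟩ => ?_
  obtain ⟨v, hv, hdist, hdeg⟩ := hnb u hu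
  exact ⟨⟨v, hv⟩, hdist, degH_eq_degree_induce (stratGraph s) B ⟨v, hv⟩ ▸ hdeg⟩

/-- If the `t`-neighbourhood (inside `H`) of every vertex of a non-trivial
biconnected component `H` of a Nash equilibrium contains a vertex of degree at
least `3`, then the average degree of `H` is at least `2 + 1/(3t+1)`. -/
theorem avg_degree_ge {n : ℕ} (hn : 2 ≤ n) (α : ℝ) (hα : 0 < α)
    (s : Fin n → Finset (Fin n)) (hs : IsNashEq α s)
    (B : Set (Fin n)) (hB : IsNontrivialBicomp (stratGraph s) B)
    (t : ℕ) (ht : 1 ≤ t)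
    (hnb : ∀ u : Fin n, ∀ hu : u ∈ B, ∃ v : Fin n, ∃ hv : v ∈ B,
      ((stratGraph s).induce B).dist ⟨u, hu⟩ ⟨v, hv⟩ ≤ t ∧
      3 ≤ degH (stratGraph s) B v) :
    2 + 1 / (3 * (t : ℝ) + 1) ≤ avgDegH (stratGraph s) B :=
  avg_degree_ge_general s B hB t hnb
end

section
/- Let G be a connected graph on n vertices and let v be a vertex minimizing the usage cost U(w) = Σ_{u ∈ V} dist_G(w,u) over all vertices w. Let T be a breadth-first-search (shortest-path) tree of G rooted at v. Then for every child t of v in T, the subtree of T rooted at t contains at most n/2 vertices. -/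
open SimpleGraph Finset

/-!
Removing the edge `vt` splits the BFS tree, and every vertex `u` on the side of `t` is reached
from `v` through `t`, so `dist t u = dist v u - 1`; every other vertex satisfies
`dist t u ≤ dist v u + 1` by the triangle inequality. Minimality of the usage cost at `v` gives
`U(v) ≤ U(t)`, and comparing the two sums forces the side of `t` to contain at most as many
vertices as the rest.
-/

theorem Finset.two_mul_card_le_of_sum_le {ι : Type*} [Fintype ι] (A : Finset ι) {f g : ι → ℕ}
    (hg : ∀ i, g i ≤ f i + 1) (hA : ∀ i ∈ A, g i + 1 ≤ f i) (hsum : ∑ i, f i ≤ ∑ i, g i) :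
    2 * #A ≤ Fintype.card ι := by
  classical
  have hin : ∑ i ∈ A, g i + #A ≤ ∑ i ∈ A, f i := by
    rw [card_eq_sum_ones, ← sum_add_distrib]
    exact sum_le_sum hA
  have hout : ∑ i ∈ Aᶜ, g i ≤ ∑ i ∈ Aᶜ, f i + #Aᶜ := by
    rw [card_eq_sum_ones, ← sum_add_distrib]
    exact sum_le_sum fun i _ => hg i
  have hf := sum_add_sum_compl A f
  have hg' := sum_add_sum_compl A g
  have hcard := card_add_card_compl A
  omega

namespace SimpleGraph

variable {V : Type*} {G : SimpleGraph V} {v t u : V}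

theorem dist_le_dist_add_one_of_adj (hadj : G.Adj v t) (u : V) :
    G.dist t u ≤ G.dist v u + 1 := by
  rw [dist_comm, dist_comm (u := v)]
  rcases hadj.diff_dist_adj (u := u) with h | h | h <;> omega

theorem IsBridge.dist_eq_dist_add_one (hb : G.IsBridge s(v, t)) (hadj : G.Adj v t)
    (hu : (G.deleteEdges {s(v, t)}).Reachable t u) : G.dist v u = G.dist t u + 1 := by
  classical
  have hvt : G.dist v t = 1 := dist_eq_one_iff_adj.mpr hadj
  have hvu : G.Reachable v u := hadj.reachable.trans (hu.mono (deleteEdges_le _))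
  refine le_antisymm ?_ ?_
  · have := hadj.reachable.dist_triangle_left u
    omega
  obtain ⟨p, hp⟩ := hvu.exists_walk_length_eq_dist
  have ht : t ∈ p.support := by
    by_contra ht
    have hedge : s(v, t) ∉ p.edges := fun he => ht (p.snd_mem_support_of_mem_edges he)
    exact isBridge_iff.mp hb ((p.toDeleteEdge _ hedge).reachable.trans hu.symm)
  have hsplit := congrArg Walk.length (p.take_spec ht)
  rw [Walk.length_append] at hsplit
  have hfirst := G.dist_le (p.takeUntil t ht)
  have hsecond := G.dist_le (p.dropUntil t ht)
  omega

theorem IsAcyclic.dist_add_one_le_of_reachable_deleteEdges {T : SimpleGraph V} (hT : T.IsAcyclic) (hTG : T ≤ G)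
    (hbfs : ∀ u, T.dist v u = G.dist v u) (ht : T.Adj v t)
    (hu : (T.deleteEdges {s(v, t)}).Reachable t u) : G.dist t u + 1 ≤ G.dist v u := by
  have hbridge : T.IsBridge s(v, t) := isAcyclic_iff_forall_adj_isBridge.mp hT ht
  have hmono : G.dist t u ≤ T.dist t u := (hu.mono (deleteEdges_le _)).dist_anti hTG
  rw [← hbfs, hbridge.dist_eq_dist_add_one ht hu]
  omega

theorem two_mul_card_le_of_dist_add_one_le [Fintype V] (hadj : G.Adj v t)
    (hv : ∑ u, G.dist v u ≤ ∑ u, G.dist t u) (A : Finset V)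
    (hA : ∀ u ∈ A, G.dist t u + 1 ≤ G.dist v u) : 2 * #A ≤ Fintype.card V :=
  A.two_mul_card_le_of_sum_le (dist_le_dist_add_one_of_adj hadj) hA hv

end SimpleGraph

theorem bfs_subtree_at_most_half_general {V : Type*} [Fintype V] (G : SimpleGraph V)
    (n : ℕ) (hn : n = Fintype.card V)
    (v : V) (hv : ∀ w : V, ∑ u : V, G.dist v u ≤ ∑ u : V, G.dist w u)
    (T : SimpleGraph V) (hT : T.IsTree) (hTG : T ≤ G)
    (hbfs : ∀ u : V, T.dist v u = G.dist v u)
    (t : V) (ht : T.Adj v t) :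
    (({u : V | (T.deleteEdges {s(v, t)}).Reachable t u}.ncard : ℝ)) ≤ (n : ℝ) / 2 := by
  classical
  set S : Set V := {u : V | (T.deleteEdges {s(v, t)}).Reachable t u}
  have hS : 2 * S.toFinset.card ≤ n := by
    rw [hn]
    refine two_mul_card_le_of_dist_add_one_le (hTG ht) (hv t) _ fun u hu => ?_
    exact hT.isAcyclic.dist_add_one_le_of_reachable_deleteEdges hTG hbfs ht
      (Set.mem_toFinset.mp hu : u ∈ S)
  rw [Set.ncard_eq_toFinset_card', le_div_iff₀ two_pos]
  exact_mod_cast (by omega : S.toFinset.card * 2 ≤ n)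

/-- Let `v` minimize the usage cost `U(w) = Σ_u dist(w,u)` in a connected graph
`G` on `n` vertices, and let `T` be a BFS (shortest-path) spanning tree of `G`
rooted at `v`. Then the subtree of `T` rooted at any child `t` of `v` contains
at most `n/2` vertices. -/
theorem bfs_subtree_at_most_half {V : Type*} [Fintype V] (G : SimpleGraph V)
    (hG : G.Connected) (n : ℕ) (hn : n = Fintype.card V)
    (v : V) (hv : ∀ w : V, ∑ u : V, G.dist v u ≤ ∑ u : V, G.dist w u)
    (T : SimpleGraph V) (hT : T.IsTree) (hTG : T ≤ G)
    (hbfs : ∀ u : V, T.dist v u = G.dist v u)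
    (t : V) (ht : T.Adj v t) :
    (({u : V | (T.deleteEdges {s(v, t)}).Reachable t u}.ncard : ℝ)) ≤ (n : ℝ) / 2 :=
  bfs_subtree_at_most_half_general G n hn v hv T hT hTG hbfs t ht
end
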